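/- arXiv:1809.03158 — 5 statements merged into one kernel-verified Lean document; each statement's English description precedes it below -/
import Mathlib

section
/- For every connected graph G of order n ≥ 4, the eccentric connectivity index ξ^c(G) is at least 3(n-1). -/
open SimpleGraph Finset

/-- Degree of a vertex (classically decidable adjacency). -/
noncomputable def deg {V : Type*} (G : SimpleGraph V) [Fintype V] (v : V) : ℕ :=
  letI := Classical.decRel G.Adj; G.degree v

/-- Eccentricity of a vertex: maximum distance to any vertex. -/
noncomputable def ecc {V : Type*} (G : SimpleGraph V) [Fintype V] (v : V) : ℕ :=
  Finset.univ.sup (fun w => G.dist v w)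

/-- Eccentric connectivity index. -/
noncomputable def eci {V : Type*} (G : SimpleGraph V) [Fintype V] : ℕ :=
  ∑ v, deg G v * ecc G v

/-- Number of pending vertices (vertices of degree 1). -/
noncomputable def pendingCount {V : Type*} (G : SimpleGraph V) [Fintype V] : ℕ :=
  (Finset.univ.filter (fun v => deg G v = 1)).card

/-!
If some vertex `u` has eccentricity 1, it is adjacent to every other vertex and contributes
`n - 1`; every other vertex contributes at least 2, since either its eccentricity is at least 2
or it is universal as well and has degree `n - 1 ≥ 2`. Otherwise every eccentricity is at least 2,
so `ξ^c(G) ≥ 2 ∑ deg = 4 |E| ≥ 4 (n - 1)`, as a connected graph has at least `n - 1` edges.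
-/

section

variable {V : Type*} [Fintype V] {G : SimpleGraph V}

lemma dist_le_ecc (v w : V) : G.dist v w ≤ ecc G v :=
  le_sup (mem_univ w)

lemma deg_eq_card_sub_one_iff (v : V) : deg G v = Fintype.card V - 1 ↔ G.IsUniversal v := by
  classical
  exact G.degree_eq_card_sub_one v

lemma sum_deg_eq_two_mul_card_edgeFinset [DecidableRel G.Adj] :
    ∑ v, deg G v = 2 * #G.edgeFinset := by
  rw [← G.sum_degrees_eq_twice_card_edges]
  unfold deg
  congr!

namespace SimpleGraph.Connected

lemma one_le_ecc [Nontrivial V] (hc : G.Connected) (v : V) : 1 ≤ ecc G v := by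
  obtain ⟨w, hw⟩ := exists_ne v
  exact (hc.pos_dist_of_ne hw.symm).trans_le (dist_le_ecc v w)

lemma one_le_deg [Nontrivial V] (hc : G.Connected) (v : V) : 1 ≤ deg G v :=
  letI := Classical.decRel G.Adj
  hc.preconnected.degree_pos_of_nontrivial v

lemma isUniversal_of_ecc_le_one (hc : G.Connected) {v : V} (hv : ecc G v ≤ 1) :
    G.IsUniversal v := by
  intro w hvw
  rw [← dist_eq_one_iff_adj]
  exact le_antisymm ((dist_le_ecc v w).trans hv) (hc.pos_dist_of_ne hvw)

lemma two_mul_card_sub_one_le_sum_deg (hc : G.Connected) :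
    2 * (Fintype.card V - 1) ≤ ∑ v, deg G v := by
  classical
  have hedges := hc.card_vert_le_card_edgeSet_add_one
  rw [Nat.card_eq_fintype_card, Nat.card_eq_fintype_card, ← edgeFinset_card] at hedges
  rw [sum_deg_eq_two_mul_card_edgeFinset]
  omega

lemma two_le_deg_mul_ecc (hc : G.Connected) (hV : 3 ≤ Fintype.card V) (v : V) :
    2 ≤ deg G v * ecc G v := by
  have : Nontrivial V := Fintype.one_lt_card_iff_nontrivial.mp (by omega)
  rcases le_or_gt 2 (ecc G v) with hecc | hecc
  · calc 2 = 1 * 2 := rfl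
      _ ≤ deg G v * ecc G v := Nat.mul_le_mul (hc.one_le_deg v) hecc
  · have hdeg : deg G v = Fintype.card V - 1 :=
      (deg_eq_card_sub_one_iff v).mpr (hc.isUniversal_of_ecc_le_one (by omega))
    calc 2 ≤ deg G v * 1 := by omega
      _ ≤ deg G v * ecc G v := Nat.mul_le_mul_left _ (hc.one_le_ecc v)

lemma four_mul_card_sub_one_le_eci (hc : G.Connected) (hecc : ∀ v, 2 ≤ ecc G v) :
    4 * (Fintype.card V - 1) ≤ eci G :=
  calc 4 * (Fintype.card V - 1) ≤ ∑ v, deg G v * 2 := by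
        have := hc.two_mul_card_sub_one_le_sum_deg
        rw [← sum_mul]
        omega
    _ ≤ eci G := sum_le_sum fun v _ => Nat.mul_le_mul_left _ (hecc v)

lemma three_mul_card_sub_one_le_eci_of_ecc_le_one (hc : G.Connected)
    (hV : 3 ≤ Fintype.card V) {u : V} (hu : ecc G u ≤ 1) :
    3 * (Fintype.card V - 1) ≤ eci G := by
  classical
  have : Nontrivial V := Fintype.one_lt_card_iff_nontrivial.mp (by omega)
  have hdeg : deg G u = Fintype.card V - 1 :=
    (deg_eq_card_sub_one_iff u).mpr (hc.isUniversal_of_ecc_le_one hu)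
  have hcenter : Fintype.card V - 1 ≤ deg G u * ecc G u := by
    simpa [hdeg] using Nat.mul_le_mul_left (deg G u) (hc.one_le_ecc u)
  have hothers : (Fintype.card V - 1) * 2 ≤ ∑ v ∈ univ.erase u, deg G v * ecc G v := by
    simpa [card_erase_of_mem] using
      card_nsmul_le_sum (univ.erase u) _ 2 fun v _ => hc.two_le_deg_mul_ecc hV v
  rw [eci, ← add_sum_erase _ _ (mem_univ u)]
  omega

theorem three_mul_card_sub_one_le_eci (hc : G.Connected) (hV : 3 ≤ Fintype.card V) :
    3 * (Fintype.card V - 1) ≤ eci G := by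
  by_cases hecc : ∀ v, 2 ≤ ecc G v
  · have := hc.four_mul_card_sub_one_le_eci hecc
    omega
  · obtain ⟨u, hu⟩ := not_forall.mp hecc
    exact hc.three_mul_card_sub_one_le_eci_of_ecc_le_one hV (by omega : ecc G u ≤ 1)

end SimpleGraph.Connected

end

theorem stmt0 (n : ℕ) (hn : 4 ≤ n) (G : SimpleGraph (Fin n)) (hc : G.Connected) :
    3 * (n - 1) ≤ eci G := by
  simpa using hc.three_mul_card_sub_one_le_eci (by simp; omega)
end

section
/- For a connected graph G of order n ≥ 4, ξ^c(G) = 3(n-1) if and only if G is isomorphic to the star S_n (one vertex adjacent to all n-1 others, which are pairwise non-adjacent). -/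
open SimpleGraph Finset

/-!
A connected graph on `n` vertices has at least `n - 1` edges, so `∑ deg = 2|E| ≥ 2(n - 1)`.
If no vertex is adjacent to all others, every eccentricity is at least 2 and
`ξ^c ≥ 2 ∑ deg ≥ 4(n - 1)`. So some vertex `c` is universal; it contributes `(n - 1) · 1`,
and every other vertex `v` contributes `deg v · ecc v ≥ 2`, with equality only when
`deg v = 1` (a universal `v` would contribute `n - 1 ≥ 3`). Hence `ξ^c = 3(n - 1)` forces all
other vertices to be leaves at `c`, i.e. `G` is the star centred at `c`, and conversely the star
attains this value.
-/

section
variable {V : Type*} [Fintype V] {G : SimpleGraph V}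

lemma deg_eq_degree [DecidableRel G.Adj] (v : V) : deg G v = G.degree v := by
  unfold deg; congr!

lemma deg_pos [Nontrivial V] (hc : G.Connected) (v : V) : 0 < deg G v := by
  classical
  rw [deg_eq_degree]
  exact hc.preconnected.degree_pos_of_nontrivial v

lemma two_mul_card_sub_one_le_sum_deg (hc : G.Connected) :
    2 * (Fintype.card V - 1) ≤ ∑ v, deg G v := by
  classical
  have hE := hc.card_vert_le_card_edgeSet_add_one
  rw [Nat.card_eq_fintype_card, Nat.card_eq_fintype_card, ← edgeFinset_card] at hE
  simp only [deg_eq_degree, sum_degrees_eq_twice_card_edges]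
  omega

lemma ecc_le_one_iff (hc : G.Connected) (v : V) : ecc G v ≤ 1 ↔ G.IsUniversal v := by
  simp only [ecc, Finset.sup_le_iff, mem_univ, true_implies, IsUniversal]
  refine forall_congr' fun w => ?_
  rw [Nat.le_one_iff_eq_zero_or_eq_one, hc.dist_eq_zero_iff, dist_eq_one_iff_adj]
  exact ⟨fun h hne => h.resolve_left hne, fun h => (em (v = w)).imp_right h⟩

lemma one_le_ecc [Nontrivial V] (hc : G.Connected) (v : V) : 1 ≤ ecc G v := by
  obtain ⟨w, hw⟩ := exists_ne v
  exact (hc.pos_dist_of_ne hw.symm).trans_le (dist_le_ecc v w)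

lemma two_le_ecc_of_not_isUniversal (hc : G.Connected) {v : V} (hv : ¬ G.IsUniversal v) :
    2 ≤ ecc G v := by
  have := (ecc_le_one_iff hc v).not.mpr hv
  omega

lemma ecc_eq_one_of_isUniversal [Nontrivial V] {c : V} (hu : G.IsUniversal c) :
    ecc G c = 1 :=
  le_antisymm ((ecc_le_one_iff (.of_isUniversal hu) c).mpr hu)
    (one_le_ecc (.of_isUniversal hu) c)

lemma ecc_le_two_of_isUniversal {c : V} (hu : G.IsUniversal c) (v : V) : ecc G v ≤ 2 := by
  have hc : G.Connected := .of_isUniversal hu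
  have hcc := (ecc_le_one_iff hc c).mpr hu
  refine Finset.sup_le fun w _ => ?_
  calc G.dist v w ≤ G.dist v c + G.dist c w := hc.dist_triangle
    _ = G.dist c v + G.dist c w := by rw [dist_comm]
    _ ≤ 2 := by linarith [dist_le_ecc (G := G) c v, dist_le_ecc (G := G) c w]

lemma eci_eq_of_isUniversal [DecidableEq V] [Nontrivial V] {c : V} (hu : G.IsUniversal c) :
    eci G = (Fintype.card V - 1) + ∑ v ∈ univ.erase c, deg G v * ecc G v := by
  rw [eci, ← add_sum_erase _ _ (mem_univ c), (deg_eq_card_sub_one_iff c).mpr hu,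
    ecc_eq_one_of_isUniversal hu, mul_one]

lemma exists_isUniversal_of_eci_lt [Nontrivial V] (hc : G.Connected)
    (h : eci G < 4 * (Fintype.card V - 1)) : ∃ c, G.IsUniversal c := by
  by_contra! hno
  have hsum : 2 * ∑ v, deg G v ≤ eci G := by
    rw [eci, mul_sum]
    exact sum_le_sum fun v _ => by
      rw [mul_comm 2]
      exact Nat.mul_le_mul_left _ (two_le_ecc_of_not_isUniversal hc (hno v))
  have := two_mul_card_sub_one_le_sum_deg hc
  omega

lemma two_le_deg_mul_ecc (hV : 3 ≤ Fintype.card V) (hc : G.Connected) (v : V) :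
    2 ≤ deg G v * ecc G v := by
  have : Nontrivial V := Fintype.one_lt_card_iff_nontrivial.mp (by omega)
  have hdeg := deg_pos hc v
  by_cases hvu : G.IsUniversal v
  · rw [(deg_eq_card_sub_one_iff v).mpr hvu, ecc_eq_one_of_isUniversal hvu]
    omega
  · nlinarith [two_le_ecc_of_not_isUniversal hc hvu]

lemma deg_eq_one_of_deg_mul_ecc_eq_two (hV : 4 ≤ Fintype.card V) (hc : G.Connected) {v : V}
    (h : deg G v * ecc G v = 2) : deg G v = 1 := by
  have : Nontrivial V := Fintype.one_lt_card_iff_nontrivial.mp (by omega)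
  have hdeg := deg_pos hc v
  by_cases hvu : G.IsUniversal v
  · rw [(deg_eq_card_sub_one_iff v).mpr hvu, ecc_eq_one_of_isUniversal hvu] at h
    omega
  · nlinarith [two_le_ecc_of_not_isUniversal hc hvu]

lemma eq_starGraph_of_forall_deg_eq_one {c : V} (hu : G.IsUniversal c)
    (hleaf : ∀ v, v ≠ c → deg G v = 1) : G = starGraph c := by
  classical
  have hunique : ∀ v w, v ≠ c → G.Adj v w → w = c := fun v w hv hvw => by
    have hv1 := hleaf v hv
    rw [deg_eq_degree, degree_eq_one_iff_existsUnique_adj] at hv1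
    exact hv1.unique hvw (hu hv.symm).symm
  ext a b
  rw [starGraph_adj]
  by_cases ha : a = c
  · subst ha
    exact ⟨fun h => ⟨h.ne, Or.inl rfl⟩, fun h => hu h.1⟩
  · refine ⟨fun h => ⟨h.ne, Or.inr (hunique a b ha h)⟩, ?_⟩
    rintro ⟨hab, rfl | rfl⟩
    · exact absurd rfl ha
    · exact (hu (Ne.symm hab)).symm

lemma exists_eq_starGraph_of_eci_eq (hV : 4 ≤ Fintype.card V) (hc : G.Connected)
    (h : eci G = 3 * (Fintype.card V - 1)) : ∃ c, G = starGraph c := by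
  classical
  have : Nontrivial V := Fintype.one_lt_card_iff_nontrivial.mp (by omega)
  obtain ⟨c, hu⟩ := exists_isUniversal_of_eci_lt hc (by omega)
  have hleaves : ∑ v ∈ univ.erase c, 2 = ∑ v ∈ univ.erase c, deg G v * ecc G v := by
    rw [eci_eq_of_isUniversal hu] at h
    simp only [sum_const, card_erase_of_mem (mem_univ c), card_univ, smul_eq_mul]
    omega
  rw [sum_eq_sum_iff_of_le fun v _ => two_le_deg_mul_ecc (by omega) hc v] at hleaves
  refine ⟨c, eq_starGraph_of_forall_deg_eq_one hu fun v hv => ?_⟩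
  exact deg_eq_one_of_deg_mul_ecc_eq_two hV hc (hleaves v (mem_erase.mpr ⟨hv, mem_univ v⟩)).symm

lemma eci_starGraph (hV : 3 ≤ Fintype.card V) (c : V) :
    eci (starGraph c) = 3 * (Fintype.card V - 1) := by
  classical
  have : Nontrivial V := Fintype.one_lt_card_iff_nontrivial.mp (by omega)
  have hleaf : ∀ v ∈ univ.erase c, deg (starGraph c) v * ecc (starGraph c) v = 2 := by
    intro v hv
    have hvc := ne_of_mem_erase hv
    obtain ⟨w, hw⟩ : ((univ.erase c).erase v).Nonempty := by
      rw [← card_pos, card_erase_of_mem hv, card_erase_of_mem (mem_univ c), card_univ]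
      omega
    obtain ⟨hwv, hwc, -⟩ := mem_erase.mp hw |>.imp_right mem_erase.mp
    have hnu : ¬ (starGraph c).IsUniversal v := fun hu => by
      simpa [hvc, hwc] using hu (Ne.symm hwv)
    rw [deg_eq_degree, degree_starGraph_of_ne_center hvc, le_antisymm
      (ecc_le_two_of_isUniversal isUniversal_starGraph_self v)
      (two_le_ecc_of_not_isUniversal (connected_starGraph c) hnu)]
  rw [eci_eq_of_isUniversal isUniversal_starGraph_self, sum_congr rfl hleaf, sum_const,
    card_erase_of_mem (mem_univ c), card_univ, smul_eq_mul]
  omega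

end

section
variable {V V' : Type*} {G : SimpleGraph V}

lemma completeBipartiteGraph_fin_one_eq_starGraph (W : Type*) :
    completeBipartiteGraph (Fin 1) W = starGraph (Sum.inl 0) := by
  ext x y
  rcases x with x | x <;> rcases y with y | y <;> simp [Fin.fin_one_eq_zero]

lemma eq_starGraph_of_iso {r : V'} (φ : G ≃g starGraph r) :
    G = starGraph (φ.symm r) := by
  ext a b
  rw [← φ.map_adj_iff, starGraph_adj, starGraph_adj, φ.injective.ne_iff, φ.eq_symm_apply,
    φ.eq_symm_apply]

lemma nonempty_iso_starGraph [Fintype V] [Fintype V']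
    (h : Fintype.card V = Fintype.card V') (c : V) (r : V') :
    Nonempty (starGraph c ≃g starGraph r) := by
  classical
  let f := Fintype.equivOfCardEq h
  let e := f.trans (Equiv.swap (f c) r)
  have hec : e c = r := by simp [e]
  refine ⟨⟨e, fun {a b} => ?_⟩⟩
  simp only [starGraph_adj, ← hec, e.injective.eq_iff, e.injective.ne_iff]

end

theorem stmt1 (n : ℕ) (hn : 4 ≤ n) (G : SimpleGraph (Fin n)) (hc : G.Connected) :
    eci G = 3 * (n - 1) ↔
      Nonempty (G ≃g completeBipartiteGraph (Fin 1) (Fin (n - 1))) := by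
  rw [completeBipartiteGraph_fin_one_eq_starGraph]
  constructor
  · intro h
    obtain ⟨c, rfl⟩ := exists_eq_starGraph_of_eci_eq (by simpa using hn) hc (by simpa using h)
    exact nonempty_iso_starGraph (by simp; omega) c _
  · rintro ⟨φ⟩
    rw [eq_starGraph_of_iso φ]
    simpa using eci_starGraph (V := Fin n) (by simp; omega) (φ.symm (Sum.inl 0))
end

section
/- Let G be a connected graph of order 5 with at least two dominating vertices. Then ξ^c(G) ≥ 20, with equality if and only if G is isomorphic to K_5 or to the join of K_2 with the empty graph on 3 vertices. -/
open SimpleGraph Finset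

/-- Join of an edge with an empty graph on n - 2 vertices. -/
def Sn2 (n : ℕ) : SimpleGraph (Fin n) :=
  SimpleGraph.fromRel (fun v w => v.val < 2 ∨ w.val < 2)

section Aux

variable {G : SimpleGraph (Fin 5)}

lemma deg_eq (G : SimpleGraph (Fin 5)) [inst : DecidableRel G.Adj] (v : Fin 5) :
    deg G v = G.degree v := by
  unfold deg
  congr!

lemma deg_iso {H : SimpleGraph (Fin 5)} (e : G ≃g H) (v : Fin 5) :
    deg G v = deg H (e v) := by
  classical
  rw [deg_eq, deg_eq, ← SimpleGraph.card_neighborSet_eq_degree,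
    ← SimpleGraph.card_neighborSet_eq_degree]
  exact Fintype.card_congr (e.mapNeighborSet v)

lemma adj_of_deg4 {v : Fin 5} (hv : deg G v = 4) {w : Fin 5} (hw : w ≠ v) :
    G.Adj v w := by
  classical
  rw [deg_eq] at hv
  have hsub : G.neighborFinset v ⊆ univ.erase v := by
    intro x hx
    rw [mem_neighborFinset] at hx
    exact Finset.mem_erase.mpr ⟨(G.ne_of_adj hx).symm, Finset.mem_univ x⟩
  have hcard : (univ.erase v).card ≤ (G.neighborFinset v).card := by
    rw [Finset.card_erase_of_mem (Finset.mem_univ v)]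
    simp [SimpleGraph.card_neighborFinset_eq_degree, hv]
  have heq := Finset.eq_of_subset_of_card_le hsub hcard
  have : w ∈ G.neighborFinset v := by
    rw [heq]
    exact Finset.mem_erase.mpr ⟨hw, Finset.mem_univ w⟩
  rwa [mem_neighborFinset] at this

lemma deg_le_four (v : Fin 5) : deg G v ≤ 4 := by
  classical
  rw [deg_eq]
  have := G.degree_lt_card_verts v
  simp only [Fintype.card_fin] at this
  omega

lemma dist_le_one {v : Fin 5} (hv : deg G v = 4) (w : Fin 5) : G.dist v w ≤ 1 := by
  rcases eq_or_ne w v with rfl | hw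
  · simp [SimpleGraph.dist_self]
  · rw [SimpleGraph.dist_eq_one_iff_adj.mpr (adj_of_deg4 hv hw)]

lemma ecc_eq_one {v : Fin 5} (hv : deg G v = 4) : ecc G v = 1 := by
  apply le_antisymm
  · exact Finset.sup_le fun w _ => dist_le_one hv w
  · have hne : (if v = 0 then (1 : Fin 5) else 0) ≠ v := by
      split <;> simp_all <;> omega
    have h1 : G.dist v (if v = 0 then (1 : Fin 5) else 0) = 1 :=
      SimpleGraph.dist_eq_one_iff_adj.mpr (adj_of_deg4 hv hne)
    calc 1 = G.dist v _ := h1.symm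
    _ ≤ _ := Finset.le_sup (Finset.mem_univ _)

lemma dist_le_two (hc : G.Connected) {u : Fin 5} (hu : deg G u = 4) (v w : Fin 5) :
    G.dist v w ≤ 2 := by
  rcases eq_or_ne v w with rfl | hvw
  · simp [SimpleGraph.dist_self]
  rcases eq_or_ne v u with rfl | hvu
  · exact (dist_le_one hu w).trans one_le_two
  calc G.dist v w ≤ G.dist v u + G.dist u w := hc.dist_triangle
  _ ≤ 1 + 1 := by
      gcongr
      · rw [SimpleGraph.dist_comm]
        exact dist_le_one hu v
      · exact dist_le_one hu w

lemma ecc_eq_two (hc : G.Connected) {u : Fin 5} (hu : deg G u = 4)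
    {v : Fin 5} (hv : deg G v ≠ 4) : ecc G v = 2 := by
  classical
  apply le_antisymm
  · exact Finset.sup_le fun w _ => dist_le_two hc hu v w
  · -- there is a vertex w ≠ v not adjacent to v
    have : ∃ w, w ≠ v ∧ ¬ G.Adj v w := by
      by_contra h
      push_neg at h
      apply hv
      rw [deg_eq]
      have hsub : univ.erase v ⊆ G.neighborFinset v := by
        intro x hx
        rw [mem_neighborFinset]
        exact h x (Finset.mem_erase.mp hx).1
      have hsub' : G.neighborFinset v ⊆ univ.erase v := by
        intro x hx
        rw [mem_neighborFinset] at hx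
        exact Finset.mem_erase.mpr ⟨(G.ne_of_adj hx).symm, Finset.mem_univ x⟩
      have := Finset.Subset.antisymm hsub hsub'
      rw [← SimpleGraph.card_neighborFinset_eq_degree, ← this,
        Finset.card_erase_of_mem (Finset.mem_univ v)]
      simp
    obtain ⟨w, hwv, hnadj⟩ := this
    have hpos : 0 < G.dist v w := hc.pos_dist_of_ne (Ne.symm hwv)
    have hne1 : G.dist v w ≠ 1 := by
      intro h1
      exact hnadj (SimpleGraph.dist_eq_one_iff_adj.mp h1)
    have h2 : 2 ≤ G.dist v w := by omega
    exact h2.trans (Finset.le_sup (Finset.mem_univ w))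

lemma two_le_deg {u1 u2 : Fin 5} (h12 : u1 ≠ u2) (h1 : deg G u1 = 4)
    (h2 : deg G u2 = 4) (v : Fin 5) : 2 ≤ deg G v := by
  classical
  rcases eq_or_ne v u1 with rfl | hv1
  · omega
  rcases eq_or_ne v u2 with rfl | hv2
  · omega
  rw [deg_eq, ← SimpleGraph.card_neighborFinset_eq_degree]
  have hsub : ({u1, u2} : Finset (Fin 5)) ⊆ G.neighborFinset v := by
    intro x hx
    rw [mem_neighborFinset]
    rcases Finset.mem_insert.mp hx with rfl | hx
    · exact (adj_of_deg4 h1 hv1).symm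
    · rw [Finset.mem_singleton] at hx
      subst hx
      exact (adj_of_deg4 h2 hv2).symm
  calc 2 = ({u1, u2} : Finset (Fin 5)).card := by
        rw [Finset.card_insert_of_notMem (by simpa using h12), Finset.card_singleton]
  _ ≤ _ := Finset.card_le_card hsub

instance : DecidableRel (Sn2 5).Adj := fun a b =>
  decidable_of_iff _ (SimpleGraph.fromRel_adj _ a b).symm

lemma Sn2_deg (y : Fin 5) : deg (Sn2 5) y = if y.val < 2 then 4 else 2 := by
  rw [deg_eq]
  revert y
  decide

end Aux

set_option maxHeartbeats 2000000 in
theorem stmt6 (G : SimpleGraph (Fin 5)) (hc : G.Connected)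
    (hdom : 2 ≤ (Finset.univ.filter (fun v => deg G v = 4)).card) :
    20 ≤ eci G ∧ (eci G = 20 ↔
      (Nonempty (G ≃g (⊤ : SimpleGraph (Fin 5))) ∨ Nonempty (G ≃g Sn2 5))) := by
  classical
  obtain ⟨u1, hu1m, u2, hu2m, h12⟩ := Finset.one_lt_card.mp hdom
  rw [Finset.mem_filter] at hu1m hu2m
  have hu1 : deg G u1 = 4 := hu1m.2
  have hu2 : deg G u2 = 4 := hu2m.2
  -- each term is at least 4
  have hterm : ∀ v, 4 ≤ deg G v * ecc G v := by
    intro v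
    by_cases hv : deg G v = 4
    · rw [hv, ecc_eq_one hv]
    · rw [ecc_eq_two hc hu1 hv]
      have := two_le_deg h12 hu1 hu2 v
      omega
  have hineq : 20 ≤ eci G := by
    calc (20 : ℕ) = ∑ _v : Fin 5, 4 := by simp
    _ ≤ ∑ v, deg G v * ecc G v := Finset.sum_le_sum fun v _ => hterm v
  refine ⟨hineq, ?_, ?_⟩
  · -- forward direction
    intro h20
    have heach : ∀ v, deg G v * ecc G v = 4 := by
      have h := (Finset.sum_eq_sum_iff_of_le (fun (i : Fin 5) _ => hterm i)).mp
        (by rw [show ∑ _v : Fin 5, 4 = 20 by simp]; exact h20.symm)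
      intro v
      exact (h v (Finset.mem_univ v)).symm
    have hdeg24 : ∀ v, deg G v = 4 ∨ deg G v = 2 := by
      intro v
      by_cases hv : deg G v = 4
      · exact Or.inl hv
      · have := heach v
        rw [ecc_eq_two hc hu1 hv] at this
        omega
    by_cases hall : ∀ v, deg G v = 4
    · left
      exact ⟨⟨Equiv.refl _, by
        intro a b
        simp only [Equiv.refl_apply, top_adj]
        constructor
        · intro hab
          exact adj_of_deg4 (hall a) (Ne.symm hab)
        · intro hab
          exact G.ne_of_adj hab⟩⟩
    · right
      push_neg at hall
      obtain ⟨w0, hw0⟩ := hall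
      have hw02 : deg G w0 = 2 := (hdeg24 w0).resolve_left hw0
      -- the set of dominating vertices is exactly {u1, u2}
      set S : Finset (Fin 5) := univ.filter (fun v => deg G v = 4) with hS
      have hScard : S.card = 2 := by
        have hsub : S ⊆ G.neighborFinset w0 := by
          intro x hx
          rw [hS, Finset.mem_filter] at hx
          rw [mem_neighborFinset]
          have hxw : w0 ≠ x := by intro h; rw [h] at hw0; exact hw0 hx.2
          exact (adj_of_deg4 hx.2 hxw).symm
        have := Finset.card_le_card hsub
        rw [SimpleGraph.card_neighborFinset_eq_degree, ← deg_eq, hw02] at this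
        omega
      -- adjacency characterization
      have hadj : ∀ x y, G.Adj x y ↔ x ≠ y ∧ (deg G x = 4 ∨ deg G y = 4) := by
        intro x y
        constructor
        · intro hxy
          refine ⟨G.ne_of_adj hxy, ?_⟩
          by_contra h
          push_neg at h
          have hx2 : deg G x = 2 := (hdeg24 x).resolve_left h.1
          have hy4 : deg G y ≠ 4 := h.2
          -- x is adjacent to u1, u2, y : contradiction with deg x = 2
          have hxu1 : x ≠ u1 := by intro h'; rw [h'] at hx2; omega
          have hxu2 : x ≠ u2 := by intro h'; rw [h'] at hx2; omega
          have hyu1 : y ≠ u1 := by intro h'; rw [h'] at hy4; exact hy4 hu1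
          have hyu2 : y ≠ u2 := by intro h'; rw [h'] at hy4; exact hy4 hu2
          have hsub : ({u1, u2, y} : Finset (Fin 5)) ⊆ G.neighborFinset x := by
            intro z hz
            rw [mem_neighborFinset]
            simp only [Finset.mem_insert, Finset.mem_singleton] at hz
            rcases hz with rfl | rfl | rfl
            · exact (adj_of_deg4 hu1 hxu1).symm
            · exact (adj_of_deg4 hu2 hxu2).symm
            · exact hxy
          have hc3 : ({u1, u2, y} : Finset (Fin 5)).card = 3 := by
            rw [Finset.card_insert_of_notMem (by simp [h12, Ne.symm hyu1]),
              Finset.card_insert_of_notMem (by simp [Ne.symm hyu2]),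
              Finset.card_singleton]
          have := Finset.card_le_card hsub
          rw [hc3, SimpleGraph.card_neighborFinset_eq_degree, ← deg_eq, hx2] at this
          omega
        · rintro ⟨hne, h4 | h4⟩
          · exact adj_of_deg4 h4 (Ne.symm hne)
          · exact (adj_of_deg4 h4 hne).symm
      -- build the isomorphism with Sn2 5
      have hcards : Fintype.card {x : Fin 5 // deg G x = 4} =
          Fintype.card {y : Fin 5 // (y : Fin 5).val < 2} := by
        rw [Fintype.card_subtype, Fintype.card_subtype]
        have h2 : #(filter (fun x => deg G x = 4) univ) = 2 := by
          rw [← hScard, hS]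
        rw [h2]
        decide
      have hcards' : Fintype.card {x : Fin 5 // ¬ deg G x = 4} =
          Fintype.card {y : Fin 5 // ¬ (y : Fin 5).val < 2} := by
        rw [Fintype.card_subtype_compl, Fintype.card_subtype_compl, hcards]
      let e1 := Fintype.equivOfCardEq hcards
      let e2 := Fintype.equivOfCardEq hcards'
      let f : Fin 5 → Fin 5 := fun x =>
        if h : deg G x = 4 then (e1 ⟨x, h⟩ : Fin 5) else (e2 ⟨x, h⟩ : Fin 5)
      have hkey : ∀ x : Fin 5, (f x).val < 2 ↔ deg G x = 4 := by
        intro x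
        by_cases hx : deg G x = 4
        · rw [show f x = (e1 ⟨x, hx⟩ : Fin 5) from dif_pos hx]
          exact iff_of_true (e1 ⟨x, hx⟩).2 hx
        · rw [show f x = (e2 ⟨x, hx⟩ : Fin 5) from dif_neg hx]
          exact iff_of_false (e2 ⟨x, hx⟩).2 hx
      have hinj : Function.Injective f := by
        intro x y hxy
        by_cases hx : deg G x = 4 <;> by_cases hy : deg G y = 4
        · rw [show f x = (e1 ⟨x, hx⟩ : Fin 5) from dif_pos hx,
            show f y = (e1 ⟨y, hy⟩ : Fin 5) from dif_pos hy] at hxy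
          have := e1.injective (Subtype.ext hxy)
          exact congrArg Subtype.val this
        · exact absurd ((hkey y).mp (hxy ▸ (hkey x).mpr hx)) hy
        · exact absurd ((hkey x).mp (hxy ▸ (hkey y).mpr hy)) hx
        · rw [show f x = (e2 ⟨x, hx⟩ : Fin 5) from dif_neg hx,
            show f y = (e2 ⟨y, hy⟩ : Fin 5) from dif_neg hy] at hxy
          have := e2.injective (Subtype.ext hxy)
          exact congrArg Subtype.val this
      let e : Fin 5 ≃ Fin 5 := Equiv.ofBijective f (Finite.injective_iff_bijective.mp hinj)
      have he : ∀ x, e x = f x := fun x => Equiv.ofBijective_apply _ _ _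
      have hSn : ∀ (i j : Fin 5), (Sn2 5).Adj i j ↔ i ≠ j ∧ (i.val < 2 ∨ j.val < 2) := by
        intro i j
        rw [show Sn2 5 = SimpleGraph.fromRel (fun v w => v.val < 2 ∨ w.val < 2) from rfl,
          SimpleGraph.fromRel_adj]
        constructor
        · rintro ⟨h1, h2 | h2⟩
          · exact ⟨h1, h2⟩
          · exact ⟨h1, h2.symm⟩
        · rintro ⟨h1, h2⟩
          exact ⟨h1, Or.inl h2⟩
      refine ⟨⟨e, ?_⟩⟩
      intro a b
      show (Sn2 5).Adj (e a) (e b) ↔ G.Adj a b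
      rw [hSn, hadj a b, he a, he b, hkey a, hkey b, hinj.ne_iff]
  · -- backward direction
    intro h
    obtain h | h := h
    · -- complete graph
      obtain ⟨e⟩ := h
      have hall : ∀ v, deg G v = 4 := by
        intro v
        rw [deg_eq, ← SimpleGraph.card_neighborFinset_eq_degree]
        have : G.neighborFinset v = univ.erase v := by
          ext w
          rw [mem_neighborFinset, Finset.mem_erase]
          constructor
          · intro h
            exact ⟨(G.ne_of_adj h).symm, Finset.mem_univ w⟩
          · intro ⟨h, _⟩
            have : G.Adj v w ↔ (⊤ : SimpleGraph (Fin 5)).Adj (e v) (e w) :=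
              e.map_rel_iff.symm
            rw [this, top_adj]
            exact fun hh => Ne.symm h (e.injective hh)
        rw [this, Finset.card_erase_of_mem (Finset.mem_univ v)]
        simp
      have : eci G = ∑ _v : Fin 5, 4 := by
        unfold eci
        apply Finset.sum_congr rfl
        intro v _
        rw [hall v, ecc_eq_one (hall v)]
      rw [this]
      simp
    · -- Sn2 5
      obtain ⟨e⟩ := h
      have hdeg' : ∀ v, deg G v = deg (Sn2 5) (e v) := fun v => deg_iso e v
      have hd0 : deg G (e.symm 0) = 4 := by
        rw [hdeg' (e.symm 0)]
        simp only [RelIso.apply_symm_apply]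
        rw [Sn2_deg]
        decide
      have hd1 : deg G (e.symm 1) = 4 := by
        rw [hdeg' (e.symm 1)]
        simp only [RelIso.apply_symm_apply]
        rw [Sn2_deg]
        decide
      have hterm' : ∀ v, deg G v * ecc G v = 4 := by
        intro v
        have hv := hdeg' v
        rw [Sn2_deg] at hv
        by_cases h2 : (e v : Fin 5).val < 2
        · rw [if_pos h2] at hv
          rw [hv, ecc_eq_one hv]
        · rw [if_neg h2] at hv
          rw [hv, ecc_eq_two hc hd0 (by omega)]
      have : eci G = ∑ _v : Fin 5, 4 := by
        unfold eci
        exact Finset.sum_congr rfl fun v _ => hterm' v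
      rw [this]
      simp
end

section
/- Every connected graph of order n ≥ 4 with exactly n-2 pending vertices has eccentric connectivity index equal to 5n - 6. -/
open SimpleGraph Finset

/-!
The two vertices `a`, `b` of degree `≠ 1` are adjacent, and every other vertex is a leaf hanging
at `a` or at `b`: two adjacent leaves would already form a whole component. Connectivity gives
`a` and `b` degree at least 2, so each carries a leaf. Hence `ecc a = ecc b = 2`, every leaf has
eccentricity 3, and `deg a + deg b = n` since the neighbourhoods of `a` and `b` partition the
vertices. So `ξᶜ = 3 (n - 2) + 2 n = 5 n - 6`.
-/

namespace SimpleGraph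

variable {V : Type*} {G : SimpleGraph V} {a b p q u v w : V}

lemma Reachable.mem_of_forall_adj_mem {s : Set V} (huv : G.Reachable u v)
    (hs : ∀ x ∈ s, ∀ y, G.Adj x y → y ∈ s) (hu : u ∈ s) : v ∈ s :=
  huv.mem_subgraphVerts (H := (⊤ : G.Subgraph).induce s)
    (fun x hx y hxy => ⟨hx, hs x hx y hxy, hxy⟩) hu

lemma adj_iff_of_neighborSet_eq (hv : G.neighborSet v = {a}) : G.Adj v w ↔ w = a := by
  rw [← mem_neighborSet, hv, Set.mem_singleton_iff]

lemma dist_eq_dist_add_one_of_neighborSet_eq (hc : G.Connected) (hp : G.neighborSet p = {a})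
    (hv : v ≠ p) : G.dist p v = G.dist a v + 1 := by
  apply le_antisymm
  · obtain ⟨P, hP⟩ := (hc a v).exists_walk_length_eq_dist
    simpa [hP] using G.dist_le (.cons ((adj_iff_of_neighborSet_eq hp).mpr rfl) P)
  · obtain ⟨P, hP⟩ := (hc p v).exists_walk_length_eq_dist
    cases P with
    | nil => exact absurd rfl hv
    | cons hpx P =>
      obtain rfl := (adj_iff_of_neighborSet_eq hp).mp hpx
      simpa [← hP] using G.dist_le P

lemma degree_eq_one_of_neighborSet_eq [Fintype (G.neighborSet v)] (hv : G.neighborSet v = {a}) :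
    G.degree v = 1 := by
  simp [← card_neighborSet_eq_degree, hv]

lemma ecc_eq_of_forall_dist_le [Fintype V] {k : ℕ} (hle : ∀ x, G.dist v x ≤ k)
    (hw : G.dist v w = k) : ecc G v = k :=
  le_antisymm (Finset.sup_le fun x _ => hle x) (hw ▸ Finset.le_sup (mem_univ w))

section Degree

variable [Fintype V] [DecidableRel G.Adj]

lemma Connected.adj_of_forall_degree_eq_one (hc : G.Connected) (hab : a ≠ b)
    (hleaf : ∀ v, v ≠ a → v ≠ b → G.degree v = 1) : G.Adj a b := by
  by_contra hnab
  -- `a` together with its neighbours, all of them leaves, is closed under adjacency.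
  have hclosed : ∀ x ∈ {x | x = a ∨ G.Adj a x}, ∀ y, G.Adj x y → y = a ∨ G.Adj a y := by
    rintro x (rfl | hax) y hxy
    · exact .inr hxy
    · have hxb : x ≠ b := by rintro rfl; exact hnab hax
      exact .inl <| (degree_eq_one_iff_existsUnique_adj.mp (hleaf x hax.ne.symm hxb)).unique
        hxy hax.symm
  obtain hba | hab' := (hc a b).mem_of_forall_adj_mem hclosed (.inl rfl)
  · exact hab hba.symm
  · exact hnab hab'

lemma Connected.eq_or_eq_of_adj_of_degree_eq_one (hc : G.Connected) (hpq : G.Adj p q)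
    (hp : G.degree p = 1) (hq : G.degree q = 1) (v : V) : v = p ∨ v = q := by
  refine (hc p v).mem_of_forall_adj_mem (s := {p, q}) ?_ (Set.mem_insert p _)
  rintro x (rfl | rfl) y hxy
  · exact .inr ((degree_eq_one_iff_existsUnique_adj.mp hp).unique hxy hpq)
  · exact .inl ((degree_eq_one_iff_existsUnique_adj.mp hq).unique hxy hpq.symm)

end Degree

structure IsDoubleStar (G : SimpleGraph V) (a b : V) : Prop where
  adj : G.Adj a b
  neighborSet_eq : ∀ v, v ≠ a → v ≠ b → G.neighborSet v = {a} ∨ G.neighborSet v = {b}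
  exists_adj_left : ∃ p, p ≠ b ∧ G.Adj a p
  exists_adj_right : ∃ q, q ≠ a ∧ G.Adj b q

namespace IsDoubleStar

variable (h : G.IsDoubleStar a b)
include h

lemma symm : G.IsDoubleStar b a :=
  ⟨h.adj.symm, fun v hvb hva => (h.neighborSet_eq v hva hvb).symm, h.exists_adj_right,
    h.exists_adj_left⟩

lemma neighborSet_eq_of_adj_left (hpb : p ≠ b) (hap : G.Adj a p) : G.neighborSet p = {a} := by
  refine (h.neighborSet_eq p hap.ne.symm hpb).resolve_right fun hp => h.adj.ne ?_
  exact (adj_iff_of_neighborSet_eq hp).mp hap.symm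

lemma adj_or_adj (hva : v ≠ a) (hvb : v ≠ b) : G.Adj a v ∨ G.Adj b v :=
  (h.neighborSet_eq v hva hvb).imp (fun hv => ((adj_iff_of_neighborSet_eq hv).mpr rfl).symm)
    (fun hv => ((adj_iff_of_neighborSet_eq hv).mpr rfl).symm)

lemma not_adj_and_adj (v : V) : ¬ (G.Adj a v ∧ G.Adj b v) := by
  rintro ⟨hav, hbv⟩
  rcases h.neighborSet_eq v hav.ne.symm hbv.ne.symm with hv | hv
  · exact h.adj.ne ((adj_iff_of_neighborSet_eq hv).mp hbv.symm).symm
  · exact h.adj.ne ((adj_iff_of_neighborSet_eq hv).mp hav.symm)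

lemma dist_left_le (v : V) : G.dist a v ≤ 2 := by
  by_cases hva : v = a
  · simp [hva]
  by_cases hvb : v = b
  · subst hvb
    exact (G.dist_le (.cons h.adj .nil)).trans (by simp)
  rcases h.adj_or_adj hva hvb with hav | hbv
  · exact (G.dist_le (.cons hav .nil)).trans (by simp)
  · exact (G.dist_le (.cons h.adj (.cons hbv .nil))).trans (by simp)

lemma dist_left_of_adj_right (hc : G.Connected) (hqa : q ≠ a) (hbq : G.Adj b q) :
    G.dist a q = 2 := by
  rw [dist_comm, dist_eq_dist_add_one_of_neighborSet_eq hc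
    (h.symm.neighborSet_eq_of_adj_left hqa hbq) hqa.symm, dist_eq_one_iff_adj.mpr h.adj.symm]

lemma ecc_left (hc : G.Connected) [Fintype V] : ecc G a = 2 := by
  obtain ⟨q, hqa, hbq⟩ := h.exists_adj_right
  exact ecc_eq_of_forall_dist_le h.dist_left_le (h.dist_left_of_adj_right hc hqa hbq)

lemma ecc_of_neighborSet_eq_left (hc : G.Connected) [Fintype V] (hp : G.neighborSet p = {a}) :
    ecc G p = 3 := by
  obtain ⟨q, hqa, hbq⟩ := h.exists_adj_right
  have hdist : ∀ v, v ≠ p → G.dist p v = G.dist a v + 1 := fun v hv =>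
    dist_eq_dist_add_one_of_neighborSet_eq hc hp hv
  have hqp : q ≠ p := by
    rintro rfl
    exact h.adj.ne ((adj_iff_of_neighborSet_eq hp).mp hbq.symm).symm
  refine ecc_eq_of_forall_dist_le (fun v => ?_) (w := q) ?_
  · by_cases hvp : v = p
    · simp [hvp]
    · rw [hdist v hvp]
      exact Nat.add_le_add_right (h.dist_left_le v) 1
  · rw [hdist q hqp, h.dist_left_of_adj_right hc hqa hbq]

lemma ecc_of_ne (hc : G.Connected) [Fintype V] (hva : v ≠ a) (hvb : v ≠ b) : ecc G v = 3 :=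
  (h.neighborSet_eq v hva hvb).elim (h.ecc_of_neighborSet_eq_left hc)
    (h.symm.ecc_of_neighborSet_eq_left hc)

lemma degree_add_degree [Fintype V] [DecidableRel G.Adj] :
    G.degree a + G.degree b = Fintype.card V := by
  classical
  have hcover : G.neighborFinset a ∪ G.neighborFinset b = univ := by
    refine eq_univ_of_forall fun v => ?_
    rw [mem_union, mem_neighborFinset, mem_neighborFinset]
    by_cases hva : v = a
    · exact .inr (hva ▸ h.adj.symm)
    by_cases hvb : v = b
    · exact .inl (hvb ▸ h.adj)
    exact h.adj_or_adj hva hvb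
  have hdisj : Disjoint (G.neighborFinset a) (G.neighborFinset b) :=
    Finset.disjoint_left.mpr fun v hav hbv =>
      h.not_adj_and_adj v ⟨(mem_neighborFinset ..).mp hav, (mem_neighborFinset ..).mp hbv⟩
  rw [← card_neighborFinset_eq_degree, ← card_neighborFinset_eq_degree,
    ← card_union_of_disjoint hdisj, hcover, card_univ]

lemma eci_eq (hc : G.Connected) [Fintype V] : eci G = 5 * Fintype.card V - 6 := by
  classical
  have hleaves : ∀ v ∈ univ \ {a, b}, deg G v * ecc G v = 3 := by
    intro v hv
    obtain ⟨hva, hvb⟩ : v ≠ a ∧ v ≠ b := by simpa using hv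
    rw [h.ecc_of_ne hc hva hvb, deg, (h.neighborSet_eq v hva hvb).elim
      degree_eq_one_of_neighborSet_eq degree_eq_one_of_neighborSet_eq]
  have hcard : #(univ \ {a, b}) = Fintype.card V - 2 := by
    rw [card_sdiff_of_subset (subset_univ _), card_pair h.adj.ne, card_univ]
  have hdeg := letI := Classical.decRel G.Adj; h.degree_add_degree
  have htwo : 2 ≤ Fintype.card V := card_pair h.adj.ne ▸ card_le_univ {a, b}
  rw [eci, ← sum_sdiff (subset_univ {a, b}), sum_congr rfl hleaves, sum_pair h.adj.ne,
    h.ecc_left hc, h.symm.ecc_left hc, sum_const, hcard, smul_eq_mul]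
  unfold deg
  omega

end IsDoubleStar

lemma Connected.isDoubleStar [Fintype V] [DecidableRel G.Adj] (hc : G.Connected)
    (hab : a ≠ b) (hleaf : ∀ v, v ≠ a → v ≠ b → G.degree v = 1) (ha : G.degree a ≠ 1)
    (hb : G.degree b ≠ 1) : G.IsDoubleStar a b := by
  have : Nontrivial V := ⟨a, b, hab⟩
  have exists_adj_ne (c d : V) (hcd : G.degree c ≠ 1) : ∃ p, p ≠ d ∧ G.Adj c p := by
    have := hc.preconnected.degree_pos_of_nontrivial c
    obtain ⟨p, hp, hpd⟩ :=
      exists_mem_ne (s := G.neighborFinset c) (by rw [card_neighborFinset_eq_degree]; omega) d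
    exact ⟨p, hpd, (mem_neighborFinset ..).mp hp⟩
  refine ⟨hc.adj_of_forall_degree_eq_one hab hleaf, fun v hva hvb => ?_,
    exists_adj_ne a b ha, exists_adj_ne b a hb⟩
  obtain ⟨x, hvx, hx⟩ := degree_eq_one_iff_existsUnique_adj.mp (hleaf v hva hvb)
  have hv : G.neighborSet v = {x} := Set.ext fun y => ⟨hx y, fun hy => hy ▸ hvx⟩
  have hxab : x = a ∨ x = b := by
    by_contra! hxab
    rcases hc.eq_or_eq_of_adj_of_degree_eq_one hvx (hleaf v hva hvb) (hleaf x hxab.1 hxab.2) a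
      with h | h
    exacts [hva h.symm, hxab.1 h.symm]
  rcases hxab with rfl | rfl
  exacts [.inl hv, .inr hv]

end SimpleGraph

theorem stmt8 (n : ℕ) (hn : 4 ≤ n) (G : SimpleGraph (Fin n)) (hc : G.Connected)
    (hp : pendingCount G = n - 2) :
    eci G = 5 * n - 6 := by
  let := Classical.decRel G.Adj
  have hcentres : #{v | ¬ G.degree v = 1} = 2 := by
    have := card_filter_add_card_filter_not (s := univ) (fun v : Fin n => G.degree v = 1)
    rw [card_univ, Fintype.card_fin] at this
    change #{v | G.degree v = 1} = n - 2 at hp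
    omega
  obtain ⟨a, b, hab, hcentres_eq⟩ := card_eq_two.mp hcentres
  have hcentre_iff : ∀ v, ¬ G.degree v = 1 ↔ v = a ∨ v = b := fun v => by
    simpa using congrArg (v ∈ ·) hcentres_eq
  have hleaf : ∀ v, v ≠ a → v ≠ b → G.degree v = 1 := fun v hva hvb =>
    not_not.mp fun hv => ((hcentre_iff v).mp hv).elim hva hvb
  have hstar := hc.isDoubleStar hab hleaf ((hcentre_iff a).mpr (.inl rfl))
    ((hcentre_iff b).mpr (.inr rfl))
  simpa using hstar.eci_eq hc
end

section
/- Let G be a connected graph of order n with m edges, n-1 ≤ m < n(n-1)/2, and set k = ⌊(2n-1-√((2n-1)² - 8m))/2⌋. Then ξ^c(G) ≥ 4m - k(n-1). -/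
open SimpleGraph Finset

theorem stmt16 (n m : ℕ) (G : SimpleGraph (Fin n)) (hc : G.Connected)
    (hm : (letI := Classical.decRel G.Adj; G.edgeFinset.card) = m)
    (hm1 : n - 1 ≤ m) (hm2 : m < n * (n - 1) / 2)
    (k : ℤ)
    (hk : k = ⌊((2 * (n : ℝ) - 1) - Real.sqrt ((2 * (n : ℝ) - 1) ^ 2 - 8 * m)) / 2⌋) :
    4 * (m : ℤ) - k * ((n : ℤ) - 1) ≤ (eci G : ℤ) := by
  letI : DecidableRel G.Adj := Classical.decRel G.Adj
  have hn3 : 3 ≤ n := by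
    by_contra h
    interval_cases n <;> omega
  have hdegeq : ∀ v, deg G v = G.degree v := fun v => rfl
  -- 2m < n(n-1)
  have hNmod : (n * (n - 1)) % 2 = 0 := by
    have : Even ((n - 1) * ((n - 1) + 1)) := Nat.even_mul_succ_self (n - 1)
    have h1 : (n - 1) + 1 = n := by omega
    rw [h1, mul_comm] at this
    exact Nat.even_iff.mp this
  have h2m : 2 * m < n * (n - 1) := by
    have hdvd := Nat.dvd_of_mod_eq_zero hNmod
    omega
  -- handshake
  have hsum : ∑ v, G.degree v = 2 * m := by
    rw [sum_degrees_eq_twice_card_edges, hm]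
  classical
  set D : Finset (Fin n) := univ.filter (fun v => G.degree v = n - 1) with hD
  set d : ℕ := D.card with hd
  -- dominating vertices are adjacent to everything else
  have hdom : ∀ u ∈ D, ∀ w, w ≠ u → G.Adj u w := by
    intro u hu w hw
    have hdu : G.degree u = n - 1 := (mem_filter.mp hu).2
    have hsub : G.neighborFinset u ⊆ univ.erase u := by
      intro x hx
      exact mem_erase.mpr ⟨((G.mem_neighborFinset _ _).mp hx).ne', mem_univ x⟩
    have hcard : (univ.erase u).card ≤ (G.neighborFinset u).card := by
      rw [card_erase_of_mem (mem_univ u), card_univ, Fintype.card_fin,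
        card_neighborFinset_eq_degree, hdu]
    have heq := Finset.eq_of_subset_of_card_le hsub hcard
    have : w ∈ G.neighborFinset u := by
      rw [heq]; exact mem_erase.mpr ⟨hw, mem_univ w⟩
    exact (G.mem_neighborFinset _ _).mp this
  have hdegle : ∀ v : Fin n, G.degree v ≤ n - 1 := by
    intro v
    have := G.degree_lt_card_verts v
    rw [Fintype.card_fin] at this
    omega
  -- sum over D and over complement
  have hsumD : ∑ v ∈ D, G.degree v = d * (n - 1) := by
    rw [Finset.sum_congr rfl (fun v hv => (mem_filter.mp hv).2), Finset.sum_const, smul_eq_mul]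
  have hsplit : ∑ v ∈ D, G.degree v + ∑ v ∈ univ.filter (fun v => ¬ G.degree v = n - 1), G.degree v = 2 * m := by
    rw [hD, Finset.sum_filter_add_sum_filter_not, hsum]
  set Dc : Finset (Fin n) := univ.filter (fun v => ¬ G.degree v = n - 1) with hDc
  -- each non-dominating vertex is adjacent to all dominating ones
  have hdegDc : ∀ v ∈ Dc, d ≤ G.degree v := by
    intro v hv
    have hv' : ¬ G.degree v = n - 1 := (mem_filter.mp hv).2
    have hsub : D ⊆ G.neighborFinset v := by
      intro u hu
      have hne : u ≠ v := by
        intro h; rw [h] at hu; exact hv' (mem_filter.mp hu).2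
      exact (G.mem_neighborFinset _ _).mpr ((hdom u hu v (Ne.symm hne)).symm)
    calc d ≤ (G.neighborFinset v).card := Finset.card_le_card hsub
      _ = G.degree v := card_neighborFinset_eq_degree G v
  have hDccard : Dc.card = n - d := by
    have : D.card + Dc.card = n := by
      rw [hD, hDc, Finset.card_filter_add_card_filter_not, card_univ, Fintype.card_fin]
    omega
  -- key counting inequality : d(n-1) + (n-d)d ≤ 2m
  have hkey : d * (n - 1) + (n - d) * d ≤ 2 * m := by
    have h1 : (n - d) * d ≤ ∑ v ∈ Dc, G.degree v := by
      calc (n - d) * d = ∑ _v ∈ Dc, d := by rw [Finset.sum_const, smul_eq_mul, hDccard]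
        _ ≤ ∑ v ∈ Dc, G.degree v := Finset.sum_le_sum hdegDc
    omega
  -- d ≤ n - 1
  have hdn : d ≤ n - 1 := by
    by_contra h
    have hdn' : d = n := by
      have := Finset.card_le_card (Finset.subset_univ D)
      rw [card_univ, Fintype.card_fin] at this
      omega
    have : n * (n - 1) ≤ 2 * m := by
      calc n * (n - 1) = d * (n - 1) + (n - d) * d := by rw [hdn', Nat.sub_self, zero_mul, add_zero]
        _ ≤ 2 * m := hkey
    omega
  -- eccentricity bounds
  have hecc1 : ∀ v : Fin n, 1 ≤ ecc G v := by
    intro v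
    obtain ⟨w, hw⟩ := Fintype.exists_ne_of_one_lt_card (by rw [Fintype.card_fin]; omega) v
    have hpos : 0 < G.dist v w := hc.pos_dist_of_ne (Ne.symm hw)
    calc 1 ≤ G.dist v w := hpos
      _ ≤ ecc G v := Finset.le_sup (mem_univ w)
  have hecc2 : ∀ v ∈ Dc, 2 ≤ ecc G v := by
    intro v hv
    have hv' : ¬ G.degree v = n - 1 := (mem_filter.mp hv).2
    have hsub : G.neighborFinset v ⊆ univ.erase v := by
      intro x hx
      exact mem_erase.mpr ⟨((G.mem_neighborFinset _ _).mp hx).ne', mem_univ x⟩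
    have hcard : (G.neighborFinset v).card < (univ.erase v).card := by
      rw [card_erase_of_mem (mem_univ v), card_univ, Fintype.card_fin,
        card_neighborFinset_eq_degree]
      have := hdegle v
      omega
    have hss : G.neighborFinset v ⊂ univ.erase v :=
      Finset.ssubset_iff_subset_ne.mpr ⟨hsub, fun h => by rw [h] at hcard; omega⟩
    obtain ⟨w, hwe, hwn⟩ := Finset.exists_of_ssubset hss
    have hwv : w ≠ v := (mem_erase.mp hwe).1
    have hnadj : ¬ G.Adj v w := fun h => hwn ((G.mem_neighborFinset _ _).mpr h)
    have h0 : G.dist v w ≠ 0 := (hc.pos_dist_of_ne (Ne.symm hwv)).ne'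
    have h1 : G.dist v w ≠ 1 := fun h => hnadj (SimpleGraph.dist_eq_one_iff_adj.mp h)
    calc 2 ≤ G.dist v w := by omega
      _ ≤ ecc G v := Finset.le_sup (mem_univ w)
  -- lower bound on eci
  have heci : (4 * m : ℤ) - d * ((n : ℤ) - 1) ≤ (eci G : ℤ) := by
    have hbound : d * (n - 1) + 2 * ∑ v ∈ Dc, G.degree v ≤ eci G := by
      have hsplit2 : eci G = ∑ v ∈ D, G.degree v * ecc G v + ∑ v ∈ Dc, G.degree v * ecc G v := by
        unfold eci
        rw [Finset.sum_congr rfl (fun v _ => by rw [hdegeq])]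
        rw [hD, hDc, Finset.sum_filter_add_sum_filter_not]
      rw [hsplit2]
      have h1 : d * (n - 1) ≤ ∑ v ∈ D, G.degree v * ecc G v := by
        calc d * (n - 1) = ∑ v ∈ D, G.degree v := hsumD.symm
          _ = ∑ v ∈ D, G.degree v * 1 := by simp
          _ ≤ ∑ v ∈ D, G.degree v * ecc G v :=
            Finset.sum_le_sum (fun v _ => Nat.mul_le_mul_left _ (hecc1 v))
      have h2 : 2 * ∑ v ∈ Dc, G.degree v ≤ ∑ v ∈ Dc, G.degree v * ecc G v := by
        rw [Finset.mul_sum]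
        exact Finset.sum_le_sum (fun v hv => by
          rw [mul_comm]; exact Nat.mul_le_mul_left _ (hecc2 v hv))
      omega
    have hS : ∑ v ∈ Dc, G.degree v = 2 * m - d * (n - 1) := by omega
    have hdle : d * (n - 1) ≤ 2 * m := by omega
    have : 4 * m - d * (n - 1) ≤ eci G := by omega
    have hcast : ((4 * m - d * (n - 1) : ℕ) : ℤ) ≤ (eci G : ℤ) := by exact_mod_cast this
    have h1 : ((4 * m - d * (n - 1) : ℕ) : ℤ) = 4 * (m : ℤ) - (d : ℤ) * ((n : ℕ) - 1 : ℕ) := by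
      rw [Nat.cast_sub (by omega : d * (n - 1) ≤ 4 * m)]
      push_cast
      ring
    rw [h1] at hcast
    have h2 : (((n : ℕ) - 1 : ℕ) : ℤ) = (n : ℤ) - 1 := by
      push_cast [Nat.cast_sub (by omega : 1 ≤ n)]; ring
    rw [h2] at hcast
    exact hcast
  -- d ≤ k
  have hdk : (d : ℤ) ≤ k := by
    rw [hk]
    apply Int.le_floor.mpr
    rw [Int.cast_natCast]
    -- show (d:ℝ) ≤ (2n-1-√Δ)/2
    have hkeyR : (d : ℝ) * (2 * n - 1 - d) ≤ 2 * m := by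
      have hkZ : (d : ℤ) * (2 * n - 1 - d) ≤ 2 * m := by
        have := hkey
        have hdn' : d ≤ n := by omega
        have h1 : ((d * (n - 1) + (n - d) * d : ℕ) : ℤ) ≤ ((2 * m : ℕ) : ℤ) := by
          exact_mod_cast this
        push_cast [Nat.cast_sub (by omega : 1 ≤ n), Nat.cast_sub hdn'] at h1
        nlinarith [h1]
      exact_mod_cast hkZ
    have hdnR : (d : ℝ) ≤ (n : ℝ) - 1 := by
      have : (d : ℤ) ≤ (n : ℤ) - 1 := by omega
      exact_mod_cast this
    have hnR : (3 : ℝ) ≤ n := by exact_mod_cast hn3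
    have hnn : (0 : ℝ) ≤ 2 * (n : ℝ) - 1 - 2 * d := by linarith
    have hsq : (2 * (n : ℝ) - 1) ^ 2 - 8 * m ≤ (2 * (n : ℝ) - 1 - 2 * d) ^ 2 := by
      nlinarith [hkeyR]
    have hsqrt : Real.sqrt ((2 * (n : ℝ) - 1) ^ 2 - 8 * m) ≤ 2 * (n : ℝ) - 1 - 2 * d := by
      calc Real.sqrt ((2 * (n : ℝ) - 1) ^ 2 - 8 * m)
          ≤ Real.sqrt ((2 * (n : ℝ) - 1 - 2 * d) ^ 2) := Real.sqrt_le_sqrt hsq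
        _ = 2 * (n : ℝ) - 1 - 2 * d := Real.sqrt_sq hnn
    linarith
  have hn1 : (0 : ℤ) ≤ (n : ℤ) - 1 := by
    have : (1 : ℤ) ≤ n := by exact_mod_cast (by omega : 1 ≤ n)
    omega
  calc 4 * (m : ℤ) - k * ((n : ℤ) - 1)
      ≤ 4 * (m : ℤ) - d * ((n : ℤ) - 1) := by nlinarith [hdk, hn1]
    _ ≤ (eci G : ℤ) := heci
end
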